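/- arXiv:2509.08537 — 2 statements merged into one kernel-verified Lean document; each statement's English description precedes it below -/
import Mathlib

section
/- Smoothness of the time reconstruction at the right endpoint (Lemma 4.1): the time reconstruction Û satisfies Û'(t₁) = V'(t₁) and Û(t₁) = V(t₁). In particular, since also Û(t₀) = V(t₀) and Û'(t₀) = V'(t₀) − j, the reconstruction matches V and V' at the right node, so applied interval by interval to a continuous piecewise polynomial it produces a C¹-in-time function. -/
open scoped RealInnerProductSpace
open MeasureTheory

/-- Evaluation of the `H`-valued polynomial with coefficients `c` (degree at most `k`):
`t ↦ ∑_{i=0}^{k} tⁱ • c i`. -/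
noncomputable def polyEval {H : Type*} [NormedAddCommGroup H] [NormedSpace ℝ H]
    (k : ℕ) (c : ℕ → H) (t : ℝ) : H :=
  ∑ i ∈ Finset.range (k + 1), t ^ i • c i

/-- Coefficients of the termwise derivative of the polynomial with coefficients `c`. -/
noncomputable def dC {H : Type*} [NormedAddCommGroup H] [NormedSpace ℝ H]
    (c : ℕ → H) : ℕ → H := fun i => ((i : ℝ) + 1) • c (i + 1)

/-- `u` is the coefficient function of the time reconstruction `Û` (a polynomial of degree at
most `q+1`) of the polynomial `V` with coefficient function `v` (degree at most `q`), with
jump `j`, on the interval `I = [t₀, t₁]`: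
(i) `∫_I ⟨Û'' - V'', W⟩ = ⟨j, W(t₀)⟩` for all `H`-valued polynomials `W` of degree at most `q-1`;
(ii) `Û(t₀) = V(t₀)`; (iii) `Û'(t₀) = V'(t₀) - j`. -/
def IsTimeRecon {H : Type*} [NormedAddCommGroup H] [InnerProductSpace ℝ H]
    (t₀ t₁ : ℝ) (q : ℕ) (v : ℕ → H) (j : H) (u : ℕ → H) : Prop :=
  (∀ i, q + 1 < i → u i = 0) ∧
  (∀ w : ℕ → H, (∀ i, q ≤ i → w i = 0) →
    (∫ t in t₀..t₁,
        ⟪polyEval (q + 1) (dC (dC u)) t - polyEval (q + 1) (dC (dC v)) t,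
          polyEval (q + 1) w t⟫) = ⟪j, polyEval (q + 1) w t₀⟫) ∧
  polyEval (q + 1) u t₀ = polyEval (q + 1) v t₀ ∧
  polyEval (q + 1) (dC u) t₀ = polyEval (q + 1) (dC v) t₀ - j

lemma polyEval_continuous {H : Type*} [NormedAddCommGroup H] [NormedSpace ℝ H]
    (k : ℕ) (c : ℕ → H) : Continuous (polyEval k c) := by
  unfold polyEval
  exact continuous_finset_sum _ fun i _ => (continuous_pow i).smul continuous_const

lemma hasDerivAt_polyEval {H : Type*} [NormedAddCommGroup H] [NormedSpace ℝ H]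
    (k : ℕ) (c : ℕ → H) (hc : c (k + 1) = 0) (t : ℝ) :
    HasDerivAt (polyEval k c) (polyEval k (dC c) t) t := by
  have h : HasDerivAt (polyEval k c)
      (∑ i ∈ Finset.range (k + 1), ((i : ℝ) * t ^ (i - 1)) • c i) t := by
    unfold polyEval
    exact HasDerivAt.fun_sum fun i _ => (hasDerivAt_pow i t).smul_const (c i)
  convert h using 1
  unfold polyEval dC
  rw [Finset.sum_range_succ, Finset.sum_range_succ']
  simp only [hc, smul_zero, add_zero, Nat.cast_zero, zero_mul, zero_smul, pow_zero]
  refine Finset.sum_congr rfl fun i _ => ?_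
  rw [smul_smul]
  push_cast
  ring_nf

/-- Smoothness of the time reconstruction at the right endpoint:
`Û'(t₁) = V'(t₁)` and `Û(t₁) = V(t₁)`. -/
theorem time_reconstruction_right_endpoint
    {H : Type*} [NormedAddCommGroup H] [InnerProductSpace ℝ H] [CompleteSpace H]
    (t₀ t₁ : ℝ) (h01 : t₀ < t₁) (q : ℕ) (hq : 2 ≤ q)
    (v : ℕ → H) (hv : ∀ i, q < i → v i = 0) (j : H)
    (u : ℕ → H) (hu : IsTimeRecon t₀ t₁ q v j u) :
    polyEval (q + 1) (dC u) t₁ = polyEval (q + 1) (dC v) t₁ ∧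
      polyEval (q + 1) u t₁ = polyEval (q + 1) v t₁ := by
  obtain ⟨hdeg, hint, h0, h0'⟩ := hu
  set E : ℝ → H := fun t => polyEval (q + 1) u t - polyEval (q + 1) v t with hE
  set E' : ℝ → H := fun t => polyEval (q + 1) (dC u) t - polyEval (q + 1) (dC v) t with hE'
  set E'' : ℝ → H := fun t =>
    polyEval (q + 1) (dC (dC u)) t - polyEval (q + 1) (dC (dC v)) t with hE''
  have hu2 : u (q + 1 + 1) = 0 := hdeg _ (by omega)
  have hv2 : v (q + 1 + 1) = 0 := hv _ (by omega)
  have hdu2 : dC u (q + 1 + 1) = 0 := by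
    simp [dC, hdeg _ (show q + 1 < q + 1 + 1 + 1 by omega)]
  have hdv2 : dC v (q + 1 + 1) = 0 := by
    simp [dC, hv _ (show q < q + 1 + 1 + 1 by omega)]
  have hDE : ∀ t, HasDerivAt E (E' t) t := fun t =>
    (hasDerivAt_polyEval _ u hu2 t).sub (hasDerivAt_polyEval _ v hv2 t)
  have hDE' : ∀ t, HasDerivAt E' (E'' t) t := fun t =>
    (hasDerivAt_polyEval _ (dC u) hdu2 t).sub (hasDerivAt_polyEval _ (dC v) hdv2 t)
  have hcontE'' : Continuous E'' :=
    (polyEval_continuous _ _).sub (polyEval_continuous _ _)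
  have hE'0 : E' t₀ = -j := by
    simp only [hE', h0']; abel
  have hE0 : E t₀ = 0 := by
    simp only [hE, h0, sub_self]
  -- derivative of inner products with a constant
  have hDinner : ∀ (f f' : ℝ → H), (∀ t, HasDerivAt f (f' t) t) → ∀ (w₀ : H) (t : ℝ),
      HasDerivAt (fun s => ⟪f s, w₀⟫) ⟪f' t, w₀⟫ t := by
    intro f f' hf w₀ t
    have := (hf t).inner ℝ (hasDerivAt_const t w₀)
    simpa using this
  -- Step 1: E' t₁ = 0
  have step1 : E' t₁ = 0 := by
    have key : ∀ w₀ : H, ⟪E' t₁, w₀⟫ = 0 := by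
      intro w₀
      set w : ℕ → H := fun i => if i = 0 then w₀ else 0 with hw
      have hwz : ∀ i, q ≤ i → w i = 0 := by
        intro i hi
        simp [hw, show i ≠ 0 by omega]
      have hpe : ∀ t : ℝ, polyEval (q + 1) w t = w₀ := by
        intro t
        unfold polyEval
        rw [Finset.sum_eq_single 0]
        · simp [hw]
        · intro b _ hb; simp [hw, hb]
        · intro h; exact absurd (Finset.mem_range.2 (by omega)) h
      have hI := hint w hwz
      simp only [hpe] at hI
      have hftc : (∫ t in t₀..t₁, ⟪E'' t, w₀⟫) = ⟪E' t₁, w₀⟫ - ⟪E' t₀, w₀⟫ := by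
        apply intervalIntegral.integral_eq_sub_of_hasDerivAt
        · exact fun t _ => hDinner E' E'' hDE' w₀ t
        · exact (Continuous.inner hcontE'' continuous_const).intervalIntegrable _ _
      rw [show (∫ t in t₀..t₁,
          ⟪polyEval (q + 1) (dC (dC u)) t - polyEval (q + 1) (dC (dC v)) t, w₀⟫)
          = ∫ t in t₀..t₁, ⟪E'' t, w₀⟫ from rfl, hftc, hE'0, inner_neg_left] at hI
      linarith
    have := key (E' t₁)
    rwa [real_inner_self_eq_norm_sq, pow_eq_zero_iff (by norm_num), norm_eq_zero] at this
  -- Step 2: E t₁ = 0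
  have step2 : E t₁ = 0 := by
    have key : ∀ w₀ : H, ⟪E t₁, w₀⟫ = 0 := by
      intro w₀
      set w : ℕ → H := fun i => if i = 0 then t₁ • w₀ else if i = 1 then -w₀ else 0 with hw
      have hwz : ∀ i, q ≤ i → w i = 0 := by
        intro i hi
        simp [hw, show i ≠ 0 by omega, show i ≠ 1 by omega]
      have hpe : ∀ t : ℝ, polyEval (q + 1) w t = (t₁ - t) • w₀ := by
        intro t
        unfold polyEval
        rw [← Finset.sum_subset (Finset.range_subset_range.2 (show 2 ≤ q + 1 + 1 by omega))]
        · have hrw : (t₁ - t) • w₀ = t₁ • w₀ + t • (-w₀) := by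
            rw [smul_neg, sub_smul]; abel
          rw [hrw, Finset.sum_range_succ, Finset.sum_range_one]
          simp [hw]
        · intro i _ hi
          have : ¬ i < 2 := fun h => hi (Finset.mem_range.2 h)
          simp [hw, show i ≠ 0 by omega, show i ≠ 1 by omega]
      have hI := hint w hwz
      simp only [hpe] at hI
      set G : ℝ → ℝ := fun t => (t₁ - t) * ⟪E' t, w₀⟫ + ⟪E t, w₀⟫ with hG
      have hDG : ∀ t, HasDerivAt G ((t₁ - t) * ⟪E'' t, w₀⟫) t := by
        intro t
        have h1 : HasDerivAt (fun s : ℝ => t₁ - s) (-1) t := by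
          simpa using (hasDerivAt_id t).const_sub t₁
        have h2 := hDinner E' E'' hDE' w₀ t
        have h3 := hDinner E E' hDE w₀ t
        have := (h1.mul h2).add h3
        exact this.congr_deriv (by ring)
      have hftc : (∫ t in t₀..t₁, (t₁ - t) * ⟪E'' t, w₀⟫) = G t₁ - G t₀ := by
        apply intervalIntegral.integral_eq_sub_of_hasDerivAt
        · exact fun t _ => hDG t
        · exact ((continuous_const.sub continuous_id).mul
            (Continuous.inner hcontE'' continuous_const)).intervalIntegrable _ _
      have hint_eq : (∫ t in t₀..t₁,
          ⟪polyEval (q + 1) (dC (dC u)) t - polyEval (q + 1) (dC (dC v)) t, (t₁ - t) • w₀⟫)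
          = ∫ t in t₀..t₁, (t₁ - t) * ⟪E'' t, w₀⟫ := by
        congr 1; funext t; rw [real_inner_smul_right]
      rw [hint_eq, hftc, real_inner_smul_right] at hI
      simp only [hG, hE'0, hE0, inner_neg_left, inner_zero_left, sub_self, zero_mul,
        zero_add, add_zero] at hI
      linarith
    have := key (E t₁)
    rwa [real_inner_self_eq_norm_sq, pow_eq_zero_iff (by norm_num), norm_eq_zero] at this
  exact ⟨sub_eq_zero.1 step1, sub_eq_zero.1 step2⟩
end

section
/- L² bound for the second derivative of the time reconstruction error (Lemma 4.2, eq. (4.5d)): the time reconstruction Û satisfies ∫_I ‖V''(t) − Û''(t)‖²_H dt ≤ τ⁻¹ · q² · ‖j‖²_H. -/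
open scoped RealInnerProductSpace
open MeasureTheory

section ScalarKernel

open Polynomial intervalIntegral


noncomputable def PI (p : ℝ[X]) : ℝ := ∫ x in (0:ℝ)..1, p.eval x

lemma PI_intable (p : ℝ[X]) (a b : ℝ) :
    IntervalIntegrable (fun x => p.eval x) volume a b :=
  p.continuous.intervalIntegrable _ _

lemma PI_derivative (p : ℝ[X]) : PI (derivative p) = p.eval 1 - p.eval 0 := by
  unfold PI
  refine integral_deriv_eq_sub' _ ?_ (fun x _ => (p.hasDerivAt x).differentiableAt)
    ((derivative p).continuous.continuousOn)
  funext x; exact (p.hasDerivAt x).deriv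

lemma PI_add (p q : ℝ[X]) : PI (p + q) = PI p + PI q := by
  unfold PI
  simp only [eval_add]
  exact integral_add (PI_intable p 0 1) (PI_intable q 0 1)

lemma PI_C_mul (a : ℝ) (p : ℝ[X]) : PI (C a * p) = a * PI p := by
  unfold PI
  simp only [eval_mul, eval_C]
  exact integral_const_mul a _

lemma PI_zero : PI 0 = 0 := by unfold PI; simp

lemma PI_sum {ι : Type*} (s : Finset ι) (f : ι → ℝ[X]) :
    PI (∑ i ∈ s, f i) = ∑ i ∈ s, PI (f i) := by
  classical
  induction s using Finset.induction with
  | empty => simp [PI_zero]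
  | insert _ _ h ih => rw [Finset.sum_insert h, PI_add, ih, Finset.sum_insert h]

lemma PI_X_pow (m : ℕ) : PI (X ^ m) = 1 / (m + 1) := by
  unfold PI
  simp [integral_pow]

lemma PI_ibp (p g : ℝ[X]) :
    PI (derivative p * g) =
      p.eval 1 * g.eval 1 - p.eval 0 * g.eval 0 - PI (p * derivative g) := by
  have h := PI_derivative (p * g)
  rw [derivative_mul, PI_add, eval_mul, eval_mul] at h
  linarith


noncomputable def fK (k : ℕ) : ℝ[X] := X ^ k * (X - 1) ^ k

lemma fK_eval_zero (k i : ℕ) (hik : i < k) (a : ℝ) (ha : a = 0 ∨ a = 1) :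
    (derivative^[i] (fK k)).eval a = 0 := by
  have hdvd : (X - C a) ^ (k - i) ∣ derivative^[i] (fK k) := by
    apply Polynomial.pow_sub_dvd_iterate_derivative_of_pow_dvd
    rcases ha with rfl | rfl
    · rw [map_zero]; ring_nf; exact dvd_mul_right _ _
    · exact Dvd.dvd.mul_left (by norm_num) _
  obtain ⟨r, hr⟩ := hdvd
  have hki : 0 < k - i := Nat.sub_pos_of_lt hik
  rw [hr, eval_mul, eval_pow, eval_sub, eval_X, eval_C, sub_self,
    zero_pow hki.ne', zero_mul]


lemma Bval (k : ℕ) : ∀ m : ℕ, PI (X ^ m * (X - 1) ^ k)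
    = (-1) ^ k * (m.factorial * k.factorial) / (m + k + 1).factorial := by
  induction k with
  | zero =>
      intro m
      have h1 : ((m + 0 + 1).factorial : ℝ) = (m + 1) * m.factorial := by
        simp [Nat.factorial_succ]
      simp only [pow_zero, mul_one, PI_X_pow, Nat.factorial_zero, h1, Nat.cast_one]
      have : (0:ℝ) < (m:ℝ) + 1 := by positivity
      have hf : (0:ℝ) < (m.factorial : ℝ) := by positivity
      field_simp
  | succ k ih =>
      intro m
      have hd : derivative (X ^ (m+1) * (X - 1) ^ (k+1)) =
          C ((m:ℝ)+1) * (X ^ m * (X - 1) ^ (k+1)) + C ((k:ℝ)+1) * (X ^ (m+1) * (X - 1) ^ k) := by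
        rw [derivative_mul, derivative_X_pow, derivative_pow]
        simp only [derivative_sub, derivative_X, derivative_one, sub_zero, mul_one,
          Nat.add_sub_cancel, Nat.cast_add, Nat.cast_one]
        push_cast
        ring
      have h0 : PI (derivative (X ^ (m+1) * (X - 1) ^ (k+1))) = 0 := by
        rw [PI_derivative]
        simp
      rw [hd, PI_add, PI_C_mul, PI_C_mul, ih (m+1)] at h0
      have hm1 : (0:ℝ) < (m:ℝ) + 1 := by positivity
      have key : PI (X ^ m * (X - 1) ^ (k+1)) =
          -(((k:ℝ)+1) / ((m:ℝ)+1)) * ((-1) ^ k * ((m+1).factorial * k.factorial) / (m + 1 + k + 1).factorial) := by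
        field_simp at h0 ⊢
        linarith
      rw [key]
      have e1 : ((m+1).factorial : ℝ) = (m+1) * m.factorial := by
        simp [Nat.factorial_succ]
      have e2 : ((k+1).factorial : ℝ) = (k+1) * k.factorial := by
        simp [Nat.factorial_succ]
      have e3 : (m + 1 + k + 1 : ℕ) = m + (k+1) + 1 := by ring
      rw [e3, e1, e2]
      have hfac : (0:ℝ) < ((m + (k+1) + 1).factorial : ℝ) := by positivity
      field_simp
      ring


lemma PI_iter (k : ℕ) (g : ℝ[X]) : ∀ i ≤ k,
    PI (derivative^[k] (fK k) * g) =
      (-1) ^ i * PI (derivative^[k - i] (fK k) * derivative^[i] g) := by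
  intro i
  induction i with
  | zero => simp
  | succ i ih =>
      intro hik
      have hik' : i ≤ k := Nat.le_of_succ_le hik
      rw [ih hik']
      have hsub : k - i = (k - (i+1)) + 1 := by omega
      have hlt : k - (i + 1) < k := by omega
      have hstep : derivative^[k - i] (fK k) = derivative (derivative^[k - (i+1)] (fK k)) := by
        rw [hsub, Function.iterate_succ_apply']
      rw [hstep, PI_ibp, fK_eval_zero k _ hlt 0 (Or.inl rfl), fK_eval_zero k _ hlt 1 (Or.inr rfl),
        ← Function.iterate_succ_apply' derivative]
      ring

lemma RInt_low (k m : ℕ) (hmk : m < k) : PI (derivative^[k] (fK k) * X ^ m) = 0 := by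
  have h := PI_iter k (X ^ m) (m + 1) hmk
  rw [h]
  have : derivative^[m+1] (X ^ m : ℝ[X]) = 0 := by
    rw [Polynomial.iterate_derivative_X_pow_eq_smul]
    simp [Nat.descFactorial_eq_zero_iff_lt.mpr (Nat.lt_succ_self m)]
  rw [this, mul_zero, PI_zero, mul_zero]

lemma RInt_high (k m : ℕ) (hkm : k ≤ m) :
    PI (derivative^[k] (fK k) * X ^ m)
      = (m.descFactorial k : ℝ) * (m.factorial * k.factorial) / (m + k + 1).factorial := by
  have h := PI_iter k (X ^ m) k le_rfl
  rw [h, Nat.sub_self, Function.iterate_zero_apply,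
    Polynomial.iterate_derivative_X_pow_eq_smul]
  have hsm : (fK k) * ((m.descFactorial k : ℝ) • X ^ (m - k))
      = C (m.descFactorial k : ℝ) * (X ^ m * (X - 1) ^ k) := by
    rw [smul_eq_C_mul]
    unfold fK
    rw [show X ^ m = X ^ k * X ^ (m - k) by rw [← pow_add]; congr 1; omega]
    ring
  rw [hsm, PI_C_mul, Bval]
  ring_nf
  rw [mul_comm k 2, pow_mul]
  norm_num


-- telescoping identity
noncomputable def Tm (m k : ℕ) : ℝ :=
  (-1) ^ k * (2 * k + 1) * (m.factorial : ℝ) ^ 2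
    / ((m - k).factorial * (m + k + 1).factorial)

noncomputable def Am (m k : ℕ) : ℝ :=
  (-1) ^ k * k * (m.factorial : ℝ) ^ 2
    / (m * (m - k).factorial * (m + k).factorial)

lemma Tstep (m k : ℕ) (hkm : k < m) : Tm m k = Am m k - Am m (k + 1) := by
  obtain ⟨d, rfl⟩ : ∃ d, m = k + d + 1 := ⟨m - k - 1, by omega⟩
  unfold Tm Am
  have h1 : k + d + 1 - k = d + 1 := by omega
  have h2 : k + d + 1 - (k + 1) = d := by omega
  have h3 : k + d + 1 + k + 1 = (k + d + 1 + k) + 1 := by ring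
  have h4 : k + d + 1 + (k + 1) = (k + d + 1 + k) + 1 := by ring
  rw [h1, h2, h3, h4, Nat.factorial_succ (k + d + 1 + k), Nat.factorial_succ d]
  have hd : (0:ℝ) < (d.factorial : ℝ) := by positivity
  have hy : (0:ℝ) < ((k + d + 1 + k).factorial : ℝ) := by positivity
  have hF : (0:ℝ) < ((k + d + 1).factorial : ℝ) := by positivity
  push_cast
  rw [pow_succ]
  field_simp
  ring

lemma Tlast (m : ℕ) (hm : 0 < m) : Tm m m = Am m m := by
  unfold Tm Am
  rw [Nat.sub_self, Nat.factorial_zero, Nat.factorial_succ (m + m)]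
  have hy : (0:ℝ) < ((m + m).factorial : ℝ) := by positivity
  have hm' : (0:ℝ) < (m:ℝ) := by exact_mod_cast hm
  push_cast
  field_simp
  ring

lemma sum_Tm (m : ℕ) : ∑ k ∈ Finset.range (m + 1), Tm m k = if m = 0 then 1 else 0 := by
  rcases Nat.eq_zero_or_pos m with rfl | hm
  · simp [Tm]
  · rw [if_neg hm.ne']
    rw [Finset.sum_range_succ]
    have htel : ∑ k ∈ Finset.range m, Tm m k = Am m 0 - Am m m := by
      rw [← Finset.sum_range_sub' (Am m) m]
      exact Finset.sum_congr rfl fun k hk => Tstep m k (Finset.mem_range.mp hk)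
    rw [htel, Tlast m hm]
    have : Am m 0 = 0 := by unfold Am; simp
    rw [this]; ring


noncomputable def kap (q : ℕ) : ℝ[X] :=
  ∑ k ∈ Finset.range q, C ((-1 : ℝ) ^ k * (2 * (k:ℝ) + 1) / (k.factorial : ℝ)) * derivative^[k] (fK k)

lemma kap_eval_zero (q : ℕ) : (kap q).eval 0 = q ^ 2 := by
  unfold kap
  rw [eval_finset_sum]
  have hterm : ∀ k : ℕ, (C ((-1 : ℝ) ^ k * (2 * (k:ℝ) + 1) / (k.factorial : ℝ)) * derivative^[k] (fK k)).eval 0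
      = 2 * (k:ℝ) + 1 := by
    intro k
    have he : (derivative^[k] (fK k)).eval 0 = (-1) ^ k * k.factorial := by
      rw [← Polynomial.coeff_zero_eq_eval_zero, Polynomial.coeff_iterate_derivative]
      have : (fK k).coeff (0 + k) = (-1) ^ k := by
        have h := Polynomial.coeff_X_pow_mul ((X - 1 : ℝ[X]) ^ k) k 0
        unfold fK
        rw [h, Polynomial.coeff_zero_eq_eval_zero]
        simp
      rw [this, Nat.zero_add, Nat.descFactorial_self]
      simp [mul_comm]
    rw [eval_mul, eval_C, he]
    have hf : ((k.factorial : ℝ)) ≠ 0 := by positivity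
    field_simp
    ring_nf
    rw [mul_comm k 2, pow_mul]
    norm_num
  rw [Finset.sum_congr rfl fun k _ => hterm k]
  induction q with
  | zero => simp
  | succ n ih => rw [Finset.sum_range_succ, ih]; push_cast; ring

lemma kap_moment (q m : ℕ) (hmq : m < q) :
    PI (kap q * X ^ m) = if m = 0 then 1 else 0 := by
  unfold kap
  rw [Finset.sum_mul, PI_sum]
  have hterm : ∀ k ∈ Finset.range q,
      PI (C ((-1 : ℝ) ^ k * (2 * (k:ℝ) + 1) / (k.factorial : ℝ)) * derivative^[k] (fK k) * X ^ m)
        = if k ∈ Finset.range (m + 1) then Tm m k else 0 := by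
    intro k _
    rw [mul_assoc, PI_C_mul]
    rcases lt_or_ge m k with h | h
    · rw [RInt_low k m h, if_neg (by simp [Nat.lt_succ_iff]; omega), mul_zero]
    · rw [RInt_high k m h, if_pos (by simp [Nat.lt_succ_iff, h])]
      unfold Tm
      have hdesc : ((m.descFactorial k : ℕ) : ℝ) = (m.factorial : ℝ) / (m - k).factorial := by
        have := Nat.factorial_mul_descFactorial h
        have hne : ((m - k).factorial : ℝ) ≠ 0 := by positivity
        field_simp
        rw [mul_comm]
        exact_mod_cast congrArg Nat.cast this
      rw [hdesc]
      have h1 : ((m - k).factorial : ℝ) ≠ 0 := by positivity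
      have h2 : ((m + k + 1).factorial : ℝ) ≠ 0 := by positivity
      have h3 : ((k.factorial : ℝ)) ≠ 0 := by positivity
      field_simp
  rw [Finset.sum_congr rfl hterm, Finset.sum_ite_mem,
    (by rw [Finset.inter_eq_right]; exact Finset.range_subset_range.mpr hmq :
      Finset.range q ∩ Finset.range (m + 1) = Finset.range (m + 1)), sum_Tm]


lemma kap_natDegree (q : ℕ) (hq : 1 ≤ q) : (kap q).natDegree < q := by
  have : (kap q).natDegree ≤ q - 1 := by
    apply Polynomial.natDegree_sum_le_of_forall_le
    intro k hk
    refine le_trans (Polynomial.natDegree_mul_le) ?_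
    rw [Polynomial.natDegree_C, zero_add]
    refine le_trans (Polynomial.natDegree_iterate_derivative _ _) ?_
    have hfk : (fK k).natDegree ≤ 2 * k := by
      unfold fK
      refine le_trans (Polynomial.natDegree_mul_le) ?_
      rw [Polynomial.natDegree_X_pow]
      have : ((X - 1 : ℝ[X]) ^ k).natDegree ≤ k := by
        refine le_trans (Polynomial.natDegree_pow_le) ?_
        have : (X - 1 : ℝ[X]).natDegree ≤ 1 := by
          rw [show (1 : ℝ[X]) = C 1 by simp]
          exact le_of_eq (Polynomial.natDegree_X_sub_C 1)
        nlinarith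
      omega
    have hk' : k ≤ q - 1 := by
      have := Finset.mem_range.mp hk; omega
    omega
  omega

lemma kap_moment_poly (q : ℕ) (hq : 1 ≤ q) (p : ℝ[X]) (hp : p.natDegree < q) :
    PI (kap q * p) = p.eval 0 := by
  have hrep : p = ∑ i ∈ Finset.range q, C (p.coeff i) * X ^ i := by
    conv_lhs => rw [p.as_sum_range' q hp]
    exact Finset.sum_congr rfl fun i _ => by rw [Polynomial.C_mul_X_pow_eq_monomial]
  calc PI (kap q * p) = PI (∑ i ∈ Finset.range q, C (p.coeff i) * (kap q * X ^ i)) := by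
        congr 1
        conv_lhs => rw [hrep]
        rw [Finset.mul_sum]
        exact Finset.sum_congr rfl fun i _ => by ring
    _ = ∑ i ∈ Finset.range q, p.coeff i * PI (kap q * X ^ i) := by
        rw [PI_sum]
        exact Finset.sum_congr rfl fun i _ => PI_C_mul _ _
    _ = p.eval 0 := by
        rw [Finset.sum_congr rfl fun i hi => by
          rw [kap_moment q i (Finset.mem_range.mp hi)]]
        rw [Finset.sum_eq_single 0]
        · simp [Polynomial.coeff_zero_eq_eval_zero]
        · intro i _ hi0; simp [hi0]
        · intro h; exact absurd (Finset.mem_range.mpr hq) h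


noncomputable def Kpoly (q : ℕ) (t₀ t₁ : ℝ) : ℝ[X] :=
  C (t₁ - t₀)⁻¹ * (kap q).comp (C (t₁ - t₀)⁻¹ * (X - C t₀))

variable {q : ℕ} {t₀ t₁ : ℝ}

lemma Kpoly_natDegree (hq : 1 ≤ q) : (Kpoly q t₀ t₁).natDegree < q := by
  have h1 : (C (t₁ - t₀)⁻¹ * (X - C t₀) : ℝ[X]).natDegree ≤ 1 := by
    refine le_trans (Polynomial.natDegree_mul_le) ?_
    rw [Polynomial.natDegree_C, zero_add]
    exact le_of_eq (Polynomial.natDegree_X_sub_C t₀)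
  have h2 : (Kpoly q t₀ t₁).natDegree ≤ (kap q).natDegree * 1 := by
    unfold Kpoly
    refine le_trans (Polynomial.natDegree_mul_le) ?_
    rw [Polynomial.natDegree_C, zero_add]
    exact le_trans (Polynomial.natDegree_comp_le) (Nat.mul_le_mul_left _ h1)
  rw [mul_one] at h2
  exact lt_of_le_of_lt h2 (kap_natDegree q hq)

lemma Kpoly_eval (h01 : t₀ < t₁) (t : ℝ) :
    (Kpoly q t₀ t₁).eval t = (t₁ - t₀)⁻¹ * (kap q).eval ((t - t₀) / (t₁ - t₀)) := by
  unfold Kpoly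
  rw [eval_mul, eval_C, eval_comp, eval_mul, eval_C, eval_sub, eval_X, eval_C]
  rw [div_eq_inv_mul]

lemma Kpoly_eval_t₀ (h01 : t₀ < t₁) :
    (Kpoly q t₀ t₁).eval t₀ = (t₁ - t₀)⁻¹ * (q : ℝ) ^ 2 := by
  rw [Kpoly_eval h01, sub_self, zero_div, kap_eval_zero]

lemma Kpoly_moment (hq : 1 ≤ q) (h01 : t₀ < t₁) (m : ℕ) (hmq : m < q) :
    (∫ t in t₀..t₁, (Kpoly q t₀ t₁).eval t * t ^ m) = t₀ ^ m := by
  set τ := t₁ - t₀ with hτdef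
  have hτ : 0 < τ := by simp [hτdef, h01]
  have hτ0 : τ ≠ 0 := hτ.ne'
  set G : ℝ → ℝ := fun t => (Kpoly q t₀ t₁).eval t * t ^ m with hG
  have hsub : (∫ x in (0:ℝ)..1, G (τ * x + t₀)) = τ⁻¹ • ∫ t in (τ * 0 + t₀)..(τ * 1 + t₀), G t :=
    intervalIntegral.integral_comp_mul_add G hτ0 t₀
  have hbounds : τ * 0 + t₀ = t₀ ∧ τ * 1 + t₀ = t₁ := by constructor <;> (simp [hτdef]; try ring)
  set pm : ℝ[X] := (C τ * X + C t₀) ^ m with hpm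
  have hpmdeg : pm.natDegree < q := by
    have : (C τ * X + C t₀ : ℝ[X]).natDegree ≤ 1 := by
      refine le_trans (Polynomial.natDegree_add_le _ _) ?_
      simp [Polynomial.natDegree_C]
      refine le_trans (Polynomial.natDegree_mul_le) ?_
      simp [Polynomial.natDegree_C]
    calc pm.natDegree ≤ m * 1 := le_trans (Polynomial.natDegree_pow_le) (Nat.mul_le_mul_left _ this)
      _ < q := by omega
  have hGx : ∀ x : ℝ, G (τ * x + t₀) = τ⁻¹ * (kap q * pm).eval x := by
    intro x
    rw [hG]
    simp only []
    rw [Kpoly_eval h01]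
    rw [eval_mul, hpm, eval_pow, eval_add, eval_mul, eval_C, eval_X, eval_C]
    have : (τ * x + t₀ - t₀) / (t₁ - t₀) = x := by
      rw [← hτdef]; field_simp; ring
    rw [← hτdef, this]
    ring
  have hPI : (∫ x in (0:ℝ)..1, G (τ * x + t₀)) = τ⁻¹ * PI (kap q * pm) := by
    rw [show (fun x => G (τ * x + t₀)) = fun x => τ⁻¹ * (kap q * pm).eval x from funext hGx]
    unfold PI
    exact intervalIntegral.integral_const_mul _ _
  rw [hPI, kap_moment_poly q hq pm hpmdeg] at hsub
  rw [hbounds.1, hbounds.2] at hsub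
  have hpm0 : pm.eval 0 = t₀ ^ m := by rw [hpm]; simp
  rw [hpm0] at hsub
  rw [smul_eq_mul] at hsub
  exact (mul_left_cancel₀ (inv_ne_zero hτ0) hsub).symm


end ScalarKernel


open Polynomial intervalIntegral
section aux
variable {H : Type*} [NormedAddCommGroup H] [NormedSpace ℝ H]

lemma polyEval_continuous_s6 (k : ℕ) (c : ℕ → H) : Continuous (fun t => polyEval k c t) := by
  unfold polyEval
  exact continuous_finset_sum _ fun i _ => (continuous_pow i).smul continuous_const

lemma polyEval_sub (k : ℕ) (a b : ℕ → H) (t : ℝ) :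
    polyEval k (fun i => a i - b i) t = polyEval k a t - polyEval k b t := by
  unfold polyEval
  rw [← Finset.sum_sub_distrib]
  exact Finset.sum_congr rfl fun i _ => smul_sub _ _ _

lemma polyEval_coeff_smul (k : ℕ) (p : ℝ[X]) (hp : p.natDegree < k + 1) (j : H) (t : ℝ) :
    polyEval k (fun i => p.coeff i • j) t = p.eval t • j := by
  unfold polyEval
  rw [Polynomial.eval_eq_sum_range' hp, Finset.sum_smul]
  exact Finset.sum_congr rfl fun i _ => by rw [smul_smul, mul_comm]

end aux

/-- L² bound for the second derivative of the time reconstruction error: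
`∫_I ‖V'' - Û''‖² ≤ τ⁻¹ · q² · ‖j‖²`. -/
theorem time_reconstruction_second_deriv_L2_bound
    {H : Type*} [NormedAddCommGroup H] [InnerProductSpace ℝ H] [CompleteSpace H]
    (t₀ t₁ : ℝ) (h01 : t₀ < t₁) (q : ℕ) (hq : 2 ≤ q)
    (v : ℕ → H) (hv : ∀ i, q < i → v i = 0) (j : H)
    (u : ℕ → H) (hu : IsTimeRecon t₀ t₁ q v j u) :
    (∫ t in t₀..t₁, ‖polyEval (q + 1) (dC (dC v)) t - polyEval (q + 1) (dC (dC u)) t‖ ^ 2)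
      ≤ (t₁ - t₀)⁻¹ * (q : ℝ) ^ 2 * ‖j‖ ^ 2 := by
  obtain ⟨hu1, hu2, -, -⟩ := hu
  have hq1 : 1 ≤ q := by omega
  -- error coefficients and function
  set e : ℕ → H := fun i => dC (dC u) i - dC (dC v) i with he_def
  have he : ∀ i, q ≤ i → e i = 0 := by
    intro i hi
    have hui : u (i + 1 + 1) = 0 := hu1 _ (by omega)
    have hvi : v (i + 1 + 1) = 0 := hv _ (by omega)
    simp [he_def, dC, hui, hvi]
  set E : ℝ → H := fun t => polyEval (q + 1) e t with hE_def
  have hEt2 : ∀ t, polyEval (q + 1) e t = E t := fun t => rfl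
  have hEt : ∀ t : ℝ,
      polyEval (q + 1) (dC (dC u)) t - polyEval (q + 1) (dC (dC v)) t = E t := by
    intro t
    rw [← hEt2 t, he_def, polyEval_sub]
  -- the kernel polynomial
  set Kp : ℝ[X] := Kpoly q t₀ t₁ with hKp_def
  set K : ℝ → ℝ := fun t => Kp.eval t with hK_def
  have hKt2 : ∀ t, Kp.eval t = K t := fun t => rfl
  have hKdeg : Kp.natDegree < q := Kpoly_natDegree hq1
  have hkc : ∀ i, q ≤ i → Kp.coeff i = 0 := fun i hi =>
    Polynomial.coeff_eq_zero_of_natDegree_lt (lt_of_lt_of_le hKdeg hi)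
  have hKc : Continuous K := Kp.continuous
  have hKw : ∀ t, polyEval (q + 1) (fun i => Kp.coeff i • j) t = K t • j := by
    intro t
    rw [polyEval_coeff_smul _ _ (by omega), hKt2]
  -- continuity
  have hEc : Continuous E := polyEval_continuous_s6 _ _
  -- vector moment property
  have vecMom : ∀ c : ℕ → H, (∀ i, q ≤ i → c i = 0) →
      (∫ t in t₀..t₁, K t • polyEval (q + 1) c t) = polyEval (q + 1) c t₀ := by
    intro c hc
    have hrw : ∀ t : ℝ, K t • polyEval (q + 1) c t
        = ∑ i ∈ Finset.range (q + 1 + 1), (K t * t ^ i) • c i := by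
      intro t
      unfold polyEval
      rw [Finset.smul_sum]
      exact Finset.sum_congr rfl fun i _ => by rw [smul_smul]
    simp only [hrw]
    rw [intervalIntegral.integral_finset_sum (fun i _ =>
      (show IntervalIntegrable (fun t => (K t * t ^ i) • c i) volume t₀ t₁ from
        ((hKc.mul (continuous_pow i)).smul continuous_const).intervalIntegrable _ _))]
    unfold polyEval
    refine Finset.sum_congr rfl fun i _ => ?_
    rw [intervalIntegral.integral_smul_const]
    rcases lt_or_ge i q with hiq | hiq
    · rw [show (∫ t in t₀..t₁, K t * t ^ i) = t₀ ^ i from Kpoly_moment hq1 h01 i hiq]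
    · rw [hc i hiq, smul_zero, smul_zero]
  -- the three tests
  have h1 : (∫ t in t₀..t₁, ⟪E t, E t⟫) = ⟪j, E t₀⟫ := by
    have h := hu2 e he
    simp only [hEt, hEt2] at h
    exact h
  have h2 : (∫ t in t₀..t₁, ⟪E t, K t • j⟫) = K t₀ * ‖j‖ ^ 2 := by
    have h := hu2 (fun i => Kp.coeff i • j) (fun i hi => by show Kp.coeff i • j = 0; rw [hkc i hi, zero_smul])
    simp only [hEt, hKw] at h
    rw [h, real_inner_smul_right, real_inner_self_eq_norm_sq]
  set d : ℕ → H := fun i => e i - Kp.coeff i • j with hd_def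
  have hd : ∀ i, q ≤ i → d i = 0 := by
    intro i hi
    simp [hd_def, he i hi, hkc i hi]
  set D : ℝ → H := fun t => polyEval (q + 1) d t with hD_def
  have hDt2 : ∀ t, polyEval (q + 1) d t = D t := fun t => rfl
  have hDt : ∀ t, D t = E t - K t • j := by
    intro t
    rw [← hDt2 t, hd_def, polyEval_sub, hEt2, hKw]
  have hDc : Continuous D := polyEval_continuous_s6 _ _
  have h3 : (∫ t in t₀..t₁, ⟪E t, D t⟫) = ⟪j, D t₀⟫ := by
    have h := hu2 d hd
    simp only [hEt, hDt2] at h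
    exact h
  -- cross term
  have hcross : (∫ t in t₀..t₁, ⟪K t • j, D t⟫) = ⟪j, D t₀⟫ := by
    have hrw : ∀ t : ℝ, ⟪K t • j, D t⟫ = (innerSL ℝ j) (K t • D t) := by
      intro t
      rw [innerSL_apply_apply, real_inner_smul_left, real_inner_smul_right]
    simp only [hrw]
    rw [ContinuousLinearMap.intervalIntegral_comp_comm _
      (show IntervalIntegrable (fun t => K t • D t) volume t₀ t₁ from (hKc.smul hDc).intervalIntegrable _ _)]
    rw [show (∫ t in t₀..t₁, K t • D t) = D t₀ from vecMom d hd, innerSL_apply_apply]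
  -- ∫ ‖D‖² = 0
  have hDD : (∫ t in t₀..t₁, ‖D t‖ ^ 2) = 0 := by
    have hpt : ∀ t : ℝ, ‖D t‖ ^ 2 = ⟪E t, D t⟫ - ⟪K t • j, D t⟫ := by
      intro t
      rw [← inner_sub_left, ← hDt t, real_inner_self_eq_norm_sq]
    simp only [hpt]
    rw [intervalIntegral.integral_sub
      ((hEc.inner hDc).intervalIntegrable _ _)
      (((hKc.smul continuous_const).inner hDc).intervalIntegrable _ _),
      h3, hcross, sub_self]
  -- main decomposition
  set cE : ℝ := ∫ t in t₀..t₁, ‖E t‖ ^ 2 with hcE_def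
  have hcE_nonneg : 0 ≤ cE := by
    rw [hcE_def]
    apply intervalIntegral.integral_nonneg (le_of_lt h01)
    intro t _; positivity
  have hdecomp : cE = K t₀ * ‖j‖ ^ 2 + ∫ t in t₀..t₁, ⟪E t, D t⟫ := by
    have hpt : ∀ t : ℝ, ‖E t‖ ^ 2 = ⟪E t, K t • j⟫ + ⟪E t, D t⟫ := by
      intro t
      rw [← inner_add_right, hDt t, add_sub_cancel, real_inner_self_eq_norm_sq]
    rw [hcE_def]
    simp only [hpt]
    rw [intervalIntegral.integral_add
      ((hEc.inner (hKc.smul continuous_const)).intervalIntegrable _ _)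
      ((hEc.inner hDc).intervalIntegrable _ _), h2]
  -- epsilon bound on the cross term
  have hcrossBound : ∀ ε : ℝ, 0 < ε → (∫ t in t₀..t₁, ⟪E t, D t⟫) ≤ ε / 2 * cE := by
    intro ε hε
    have hpt : ∀ t ∈ Set.Icc t₀ t₁,
        ⟪E t, D t⟫ ≤ ε / 2 * ‖E t‖ ^ 2 + 1 / (2 * ε) * ‖D t‖ ^ 2 := by
      intro t _
      have h := real_inner_le_norm (E t) (D t)
      have key : ‖E t‖ * ‖D t‖ ≤ ε / 2 * ‖E t‖ ^ 2 + 1 / (2 * ε) * ‖D t‖ ^ 2 := by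
        rw [← sub_nonneg]
        have hid : ε / 2 * ‖E t‖ ^ 2 + 1 / (2 * ε) * ‖D t‖ ^ 2 - ‖E t‖ * ‖D t‖
            = (ε * ‖E t‖ - ‖D t‖) ^ 2 / (2 * ε) := by
          field_simp
          ring
        rw [hid]
        positivity
      linarith
    have hmono : (∫ t in t₀..t₁, ⟪E t, D t⟫)
        ≤ ∫ t in t₀..t₁, (ε / 2 * ‖E t‖ ^ 2 + 1 / (2 * ε) * ‖D t‖ ^ 2) :=
      intervalIntegral.integral_mono_on (le_of_lt h01)
        ((hEc.inner hDc).intervalIntegrable _ _)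
        ((((continuous_const).mul (hEc.norm.pow 2)).add
          ((continuous_const).mul (hDc.norm.pow 2))).intervalIntegrable _ _) hpt
    have heq : (∫ t in t₀..t₁, (ε / 2 * ‖E t‖ ^ 2 + 1 / (2 * ε) * ‖D t‖ ^ 2))
        = ε / 2 * cE + 1 / (2 * ε) * ∫ t in t₀..t₁, ‖D t‖ ^ 2 := by
      rw [intervalIntegral.integral_add
        (show IntervalIntegrable (fun t => ε / 2 * ‖E t‖ ^ 2) volume t₀ t₁ from
          ((continuous_const).mul (hEc.norm.pow 2)).intervalIntegrable _ _)
        (show IntervalIntegrable (fun t => 1 / (2 * ε) * ‖D t‖ ^ 2) volume t₀ t₁ from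
          ((continuous_const).mul (hDc.norm.pow 2)).intervalIntegrable _ _),
        intervalIntegral.integral_const_mul, intervalIntegral.integral_const_mul, ← hcE_def]
    rw [heq, hDD] at hmono
    simpa using hmono
  -- conclude
  set A : ℝ := (t₁ - t₀)⁻¹ * (q : ℝ) ^ 2 * ‖j‖ ^ 2 with hA_def
  have hKA : K t₀ * ‖j‖ ^ 2 = A := by
    rw [hK_def]
    simp only []
    rw [hKp_def, Kpoly_eval_t₀ h01, hA_def]
  have hfinal : cE ≤ A := by
    by_contra hcon
    push_neg at hcon
    have hA_nonneg : 0 ≤ A := by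
      rw [hA_def]
      have : (0:ℝ) < (t₁ - t₀)⁻¹ := by
        apply inv_pos.mpr; linarith
      positivity
    have hcEpos : 0 < cE := lt_of_le_of_lt hA_nonneg hcon
    have hε : 0 < (cE - A) / cE := div_pos (by linarith) hcEpos
    have hb := hcrossBound _ hε
    have hstep : cE ≤ A + (cE - A) / cE / 2 * cE := by
      calc cE = A + ∫ t in t₀..t₁, ⟪E t, D t⟫ := by rw [hdecomp, hKA]
        _ ≤ A + (cE - A) / cE / 2 * cE := by linarith [hb]
    have hcalc : (cE - A) / cE / 2 * cE = (cE - A) / 2 := by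
      field_simp
    rw [hcalc] at hstep
    linarith
  -- rewrite the goal
  have hgoal : ∀ t : ℝ,
      ‖polyEval (q + 1) (dC (dC v)) t - polyEval (q + 1) (dC (dC u)) t‖ ^ 2 = ‖E t‖ ^ 2 := by
    intro t
    rw [norm_sub_rev, hEt]
  calc (∫ t in t₀..t₁, ‖polyEval (q + 1) (dC (dC v)) t - polyEval (q + 1) (dC (dC u)) t‖ ^ 2)
      = cE := by rw [hcE_def]; simp only [hgoal]
    _ ≤ A := hfinal
end
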